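/- Let G and H be graphs on disjoint vertex sets, and let G₀ and H₀ be induced subgraphs of G and H with α(G₀) = α(G) − 1 and α(H₀) = α(H) − 1. If the 1-join J = j(G,G₀,H,H₀) is an α-critical graph, then conditions (i)–(iii) hold for the data (G,G₀,H,H₀). -/
import Mathlib


open SimpleGraph

/-- The stability (independence) number of the subgraph of `G` induced on the
vertex set `S`: the maximum cardinality of a stable (independent) subset of `S`. -/
noncomputable def alphaOn {V : Type*} [Fintype V] (G : SimpleGraph V) (S : Set V) : ℕ :=
  sSup {n | ∃ s : Finset V, ↑s ⊆ S ∧ (∀ u ∈ s, ∀ v ∈ s, ¬ G.Adj u v) ∧ s.card = n}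

/-- The stability (independence) number `α(G)` of `G`. -/
noncomputable def alphaNum {V : Type*} [Fintype V] (G : SimpleGraph V) : ℕ :=
  alphaOn G Set.univ

/-- The edge `{u, v}` of `G` is an α-critical edge: deleting it increases the
stability number by one. -/
def IsCriticalEdge {V : Type*} [Fintype V] (G : SimpleGraph V) (u v : V) : Prop :=
  G.Adj u v ∧ alphaNum (G.deleteEdges {s(u, v)}) = alphaNum G + 1

/-- `G` is an α-critical graph: every edge is α-critical. -/
def IsAlphaCritical {V : Type*} [Fintype V] (G : SimpleGraph V) : Prop :=
  ∀ u v, G.Adj u v → alphaNum (G.deleteEdges {s(u, v)}) = alphaNum G + 1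

/-- `S` induces a maximal induced subgraph of `G` with stability number `α(G) - 1`:
`α(G[S]) = α(G) - 1` and adding any further vertex raises the stability number to `α(G)`. -/
def IsMaxAlphaSub {V : Type*} [Fintype V] (G : SimpleGraph V) (S : Set V) : Prop :=
  alphaOn G S + 1 = alphaNum G ∧ ∀ w ∉ S, alphaOn G (insert w S) = alphaNum G

/-- The 1-join `j(G, G₀, H, H₀)` of `G` and `H`, where `A = V(G₀)` and `B = V(H₀)`:
the disjoint union of `G` and `H` together with all edges between `V(G) ∖ A` and
`V(H) ∖ B`. -/
def oneJoin {α β : Type*} (G : SimpleGraph α) (H : SimpleGraph β)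
    (A : Set α) (B : Set β) : SimpleGraph (α ⊕ β) :=
  SimpleGraph.fromRel (fun x y =>
    (∃ a b, x = Sum.inl a ∧ y = Sum.inl b ∧ G.Adj a b) ∨
    (∃ a b, x = Sum.inr a ∧ y = Sum.inr b ∧ H.Adj a b) ∨
    (∃ a b, x = Sum.inl a ∧ y = Sum.inr b ∧ a ∉ A ∧ b ∉ B))

/-- The edge-vertex composition `c(G, e, H, v)` with `e = {v₁, v₂}` and
`N_H(v) = U₁ ⊔ U₂`: vertex set `V(G) ⊔ (V(H) ∖ {v})`, edge set
`(E(G) ∖ {e}) ∪ E(H - v) ∪ {v₁u : u ∈ U₁} ∪ {v₂u : u ∈ U₂}`. -/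
def evComp {α β : Type*} (G : SimpleGraph α) (v₁ v₂ : α) (H : SimpleGraph β) (v : β)
    (U₁ U₂ : Set β) : SimpleGraph (α ⊕ {b : β // b ≠ v}) :=
  SimpleGraph.fromRel (fun x y =>
    (∃ a b, x = Sum.inl a ∧ y = Sum.inl b ∧ G.Adj a b ∧ s(a, b) ≠ s(v₁, v₂)) ∨
    (∃ a b : {b : β // b ≠ v}, x = Sum.inr a ∧ y = Sum.inr b ∧ H.Adj a b) ∨
    (∃ b : {b : β // b ≠ v}, x = Sum.inl v₁ ∧ y = Sum.inr b ∧ (b : β) ∈ U₁) ∨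
    (∃ b : {b : β // b ≠ v}, x = Sum.inl v₂ ∧ y = Sum.inr b ∧ (b : β) ∈ U₂))

/-- The splitting `s(H, v)` of the vertex `v` of `H`, with `N_H(v) = N₁ ⊔ N₂`.
The new vertices `v′`, `v″`, `u` are represented by `Sum.inr 0`, `Sum.inr 1`,
`Sum.inr 2` respectively. -/
def splitting {β : Type*} (H : SimpleGraph β) (v : β) (N₁ N₂ : Set β) :
    SimpleGraph ({b : β // b ≠ v} ⊕ Fin 3) :=
  SimpleGraph.fromRel (fun x y =>
    (∃ a b : {b : β // b ≠ v}, x = Sum.inl a ∧ y = Sum.inl b ∧ H.Adj a b) ∨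
    (∃ a : {b : β // b ≠ v}, x = Sum.inl a ∧ y = Sum.inr 0 ∧ (a : β) ∈ N₁) ∨
    (∃ a : {b : β // b ≠ v}, x = Sum.inl a ∧ y = Sum.inr 1 ∧ (a : β) ∈ N₂) ∨
    (x = Sum.inr 0 ∧ y = Sum.inr 2) ∨ (x = Sum.inr 1 ∧ y = Sum.inr 2))

/-- The duplication `d(G, v)` of the vertex `v` of `G`: a new vertex `v′`
(represented by `Sum.inr ()`) is added, adjacent exactly to the closed
neighborhood `N_G[v]`. -/
def duplication {α : Type*} (G : SimpleGraph α) (v : α) : SimpleGraph (α ⊕ Unit) :=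
  SimpleGraph.fromRel (fun x y =>
    (∃ a b, x = Sum.inl a ∧ y = Sum.inl b ∧ G.Adj a b) ∨
    (∃ a, x = Sum.inl a ∧ y = Sum.inr () ∧ a ∈ insert v (G.neighborSet v)))

/-- A graph is duplication free iff it contains no pair of adjacent vertices
with equal closed neighborhoods. -/
def DuplicationFree {α : Type*} (G : SimpleGraph α) : Prop :=
  ∀ u v, G.Adj u v → insert u (G.neighborSet u) ≠ insert v (G.neighborSet v)

/-- `G` is 2-connected: it has at least three vertices and the deletion of any
single vertex leaves it connected. -/
def TwoConnected {V : Type*} [Fintype V] (G : SimpleGraph V) : Prop :=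
  3 ≤ Fintype.card V ∧ ∀ x : V, (G.induce {x}ᶜ).Connected



section basics
variable {V : Type*} [Fintype V] {G : SimpleGraph V} {S : Set V}

lemma alphaSet_bdd (G : SimpleGraph V) (S : Set V) :
    BddAbove {n | ∃ s : Finset V, ↑s ⊆ S ∧ (∀ u ∈ s, ∀ v ∈ s, ¬ G.Adj u v) ∧ s.card = n} := by
  refine ⟨Fintype.card V, fun n hn => ?_⟩
  obtain ⟨s, -, -, rfl⟩ := hn
  exact s.card_le_univ.trans_eq Finset.card_univ

lemma le_alphaOn {s : Finset V} (hs : ↑s ⊆ S) (hi : ∀ u ∈ s, ∀ v ∈ s, ¬ G.Adj u v) :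
    s.card ≤ alphaOn G S :=
  le_csSup (alphaSet_bdd G S) ⟨s, hs, hi, rfl⟩

lemma exists_alphaOn (G : SimpleGraph V) (S : Set V) :
    ∃ s : Finset V, ↑s ⊆ S ∧ (∀ u ∈ s, ∀ v ∈ s, ¬ G.Adj u v) ∧ s.card = alphaOn G S := by
  have hne : {n | ∃ s : Finset V, ↑s ⊆ S ∧ (∀ u ∈ s, ∀ v ∈ s, ¬ G.Adj u v) ∧ s.card = n}.Nonempty :=
    ⟨0, ∅, by simp⟩
  exact Nat.sSup_mem hne (alphaSet_bdd G S)

lemma exists_alphaNum (G : SimpleGraph V) :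
    ∃ s : Finset V, (∀ u ∈ s, ∀ v ∈ s, ¬ G.Adj u v) ∧ s.card = alphaNum G := by
  obtain ⟨s, -, hi, hc⟩ := exists_alphaOn G Set.univ
  exact ⟨s, hi, hc⟩

lemma le_alphaNum {s : Finset V} (hi : ∀ u ∈ s, ∀ v ∈ s, ¬ G.Adj u v) :
    s.card ≤ alphaNum G :=
  le_alphaOn (by simp) hi

lemma alphaOn_mono {S T : Set V} (h : S ⊆ T) : alphaOn G S ≤ alphaOn G T := by
  obtain ⟨s, hs, hi, hc⟩ := exists_alphaOn G S
  exact hc ▸ le_alphaOn (hs.trans h) hi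

lemma alphaOn_le_alphaNum (G : SimpleGraph V) (S : Set V) : alphaOn G S ≤ alphaNum G :=
  alphaOn_mono (Set.subset_univ S)

lemma alphaOn_deleteEdges_le [DecidableEq V] (G : SimpleGraph V) (S : Set V) (u v : V) :
    alphaOn (G.deleteEdges {s(u, v)}) S ≤ alphaOn G S + 1 := by
  obtain ⟨s, hs, hi, hc⟩ := exists_alphaOn (G.deleteEdges {s(u, v)}) S
  have h1 : ((s.erase u : Finset V) : Set V) ⊆ S :=
    (Finset.coe_subset.2 (s.erase_subset u)).trans hs
  have h2 : ∀ x ∈ s.erase u, ∀ y ∈ s.erase u, ¬ G.Adj x y := by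
    intro x hx y hy hadj
    refine hi x (Finset.mem_of_mem_erase hx) y (Finset.mem_of_mem_erase hy) ?_
    rw [deleteEdges_adj]
    refine ⟨hadj, ?_⟩
    simp only [Set.mem_singleton_iff, Sym2.eq_iff]
    rintro (⟨rfl, rfl⟩ | ⟨rfl, rfl⟩)
    · exact (Finset.ne_of_mem_erase hx) rfl
    · exact (Finset.ne_of_mem_erase hy) rfl
  have := le_alphaOn h1 h2
  have hcard : s.card - 1 ≤ (s.erase u).card := Finset.pred_card_le_card_erase
  omega

lemma alphaOn_le_alphaOn_deleteEdges (G : SimpleGraph V) (S : Set V) (E : Set (Sym2 V)) :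
    alphaOn G S ≤ alphaOn (G.deleteEdges E) S := by
  obtain ⟨s, hs, hi, hc⟩ := exists_alphaOn G S
  refine hc ▸ le_alphaOn hs fun x hx y hy hadj => hi x hx y hy (hadj.1)

end basics

section join
variable {α β : Type*} {G : SimpleGraph α} {H : SimpleGraph β} {A : Set α} {B : Set β}

@[simp] lemma oneJoin_adj_inl_inl {a b : α} :
    (oneJoin G H A B).Adj (Sum.inl a) (Sum.inl b) ↔ G.Adj a b := by
  simp only [oneJoin, fromRel_adj]
  constructor
  · rintro ⟨hne, h | h⟩ <;> aesop (add simp [SimpleGraph.adj_comm])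
  · intro h; exact ⟨by simpa using h.ne, Or.inl (Or.inl ⟨a, b, rfl, rfl, h⟩)⟩

@[simp] lemma oneJoin_adj_inr_inr {a b : β} :
    (oneJoin G H A B).Adj (Sum.inr a) (Sum.inr b) ↔ H.Adj a b := by
  simp only [oneJoin, fromRel_adj]
  constructor
  · rintro ⟨hne, h | h⟩ <;> aesop (add simp [SimpleGraph.adj_comm])
  · intro h; exact ⟨by simpa using h.ne, Or.inl (Or.inr (Or.inl ⟨a, b, rfl, rfl, h⟩))⟩

@[simp] lemma oneJoin_adj_inl_inr {a : α} {b : β} :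
    (oneJoin G H A B).Adj (Sum.inl a) (Sum.inr b) ↔ a ∉ A ∧ b ∉ B := by
  simp only [oneJoin, fromRel_adj]
  constructor
  · rintro ⟨hne, h | h⟩ <;> aesop
  · intro h; exact ⟨by simp, Or.inl (Or.inr (Or.inr ⟨a, b, rfl, rfl, h⟩))⟩

@[simp] lemma oneJoin_adj_inr_inl {a : α} {b : β} :
    (oneJoin G H A B).Adj (Sum.inr b) (Sum.inl a) ↔ a ∉ A ∧ b ∉ B := by
  rw [SimpleGraph.adj_comm]; exact oneJoin_adj_inl_inr

end join

section iso
variable {V W : Type*} [Fintype V] [Fintype W] {G : SimpleGraph V} {G' : SimpleGraph W}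

lemma alphaNum_le_iso (e : G ≃g G') : alphaNum G ≤ alphaNum G' := by
  obtain ⟨s, hi, hc⟩ := exists_alphaNum G
  rw [← hc, ← Finset.card_map e.toEquiv.toEmbedding]
  apply le_alphaNum
  intro u hu v hv hadj
  simp only [Finset.mem_map, Equiv.coe_toEmbedding] at hu hv
  obtain ⟨x, hx, rfl⟩ := hu; obtain ⟨y, hy, rfl⟩ := hv
  exact hi x hx y hy (e.map_adj_iff.mp hadj)

lemma alphaNum_iso (e : G ≃g G') : alphaNum G = alphaNum G' :=
  le_antisymm (alphaNum_le_iso e) (alphaNum_le_iso e.symm)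

lemma isAlphaCritical_iso (e : G ≃g G') (h : IsAlphaCritical G) : IsAlphaCritical G' := by
  intro u v huv
  have huv' : G.Adj (e.symm u) (e.symm v) := by
    rw [← e.map_adj_iff]; simpa using huv
  have h2 := h _ _ huv'
  have eiso : (G.deleteEdges {s(e.symm u, e.symm v)}) ≃g (G'.deleteEdges {s(u, v)}) := by
    refine ⟨e.toEquiv, ?_⟩
    intro x y
    simp only [deleteEdges_adj, Set.mem_singleton_iff, Sym2.eq_iff,
      Equiv.apply_eq_iff_eq_symm_apply]
    exact and_congr_left' e.map_adj_iff
  rw [← alphaNum_iso eiso, h2, alphaNum_iso e]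

end iso

section joinalpha
variable {α β : Type*} [Fintype α] [Fintype β] {G : SimpleGraph α} {H : SimpleGraph β}
  {A : Set α} {B : Set β}

def joinSwapIso (G : SimpleGraph α) (H : SimpleGraph β) (A : Set α) (B : Set β) :
    oneJoin G H A B ≃g oneJoin H G B A := by
  refine ⟨Equiv.sumComm α β, ?_⟩
  rintro (a | a) (b | b) <;> simp <;> tauto

lemma alphaNum_oneJoin (hA : alphaOn G A + 1 = alphaNum G) (hB : alphaOn H B + 1 = alphaNum H) :
    alphaNum (oneJoin G H A B) = alphaOn G A + alphaOn H B + 1 := by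
  classical
  apply le_antisymm
  · obtain ⟨s, hi, hc⟩ := exists_alphaNum (oneJoin G H A B)
    rw [← hc, ← Finset.card_toLeft_add_card_toRight (u := s)]
    have hslG : ∀ g ∈ s.toLeft, ∀ g' ∈ s.toLeft, ¬ G.Adj g g' := by
      intro g hg g' hg' hadj
      exact hi _ (Finset.mem_toLeft.mp hg) _ (Finset.mem_toLeft.mp hg')
        (oneJoin_adj_inl_inl.mpr hadj)
    have hsrH : ∀ h ∈ s.toRight, ∀ h' ∈ s.toRight, ¬ H.Adj h h' := by
      intro h hh h' hh' hadj
      exact hi _ (Finset.mem_toRight.mp hh) _ (Finset.mem_toRight.mp hh')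
        (oneJoin_adj_inr_inr.mpr hadj)
    by_cases hsl : ∀ g ∈ s.toLeft, g ∈ A
    · have h1 : s.toLeft.card ≤ alphaOn G A := le_alphaOn (fun g hg => hsl g hg) hslG
      have h2 : s.toRight.card ≤ alphaNum H := le_alphaNum hsrH
      omega
    · push_neg at hsl
      obtain ⟨g, hg, hgA⟩ := hsl
      have hsr : ∀ h ∈ s.toRight, h ∈ B := by
        intro h hh
        by_contra hhB
        exact hi _ (Finset.mem_toLeft.mp hg) _ (Finset.mem_toRight.mp hh)
          (oneJoin_adj_inl_inr.mpr ⟨hgA, hhB⟩)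
      have h1 : s.toLeft.card ≤ alphaNum G := le_alphaNum hslG
      have h2 : s.toRight.card ≤ alphaOn H B := le_alphaOn (fun h hh => hsr h hh) hsrH
      omega
  · obtain ⟨sG, hiG, hcG⟩ := exists_alphaNum G
    obtain ⟨sB, hsB, hiB, hcB⟩ := exists_alphaOn H B
    set t : Finset (α ⊕ β) :=
      sG.map ⟨Sum.inl, Sum.inl_injective⟩ ∪ sB.map ⟨Sum.inr, Sum.inr_injective⟩ with ht
    have hdisj : Disjoint (sG.map ⟨Sum.inl, Sum.inl_injective⟩)
        (sB.map ⟨Sum.inr, Sum.inr_injective⟩) := by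
      simp [Finset.disjoint_left, Finset.mem_map]
    have htc : t.card = alphaOn G A + alphaOn H B + 1 := by
      rw [ht, Finset.card_union_of_disjoint hdisj, Finset.card_map, Finset.card_map, hcG, hcB]
      omega
    have hti : ∀ u ∈ t, ∀ v ∈ t, ¬ (oneJoin G H A B).Adj u v := by
      intro u hu v hv
      simp only [ht, Finset.mem_union, Finset.mem_map, Function.Embedding.coeFn_mk] at hu hv
      rcases hu with ⟨x, hx, rfl⟩ | ⟨x, hx, rfl⟩ <;> rcases hv with ⟨y, hy, rfl⟩ | ⟨y, hy, rfl⟩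
      · simpa using hiG x hx y hy
      · simp only [oneJoin_adj_inl_inr]
        rintro ⟨-, hyB⟩; exact hyB (hsB hy)
      · simp only [oneJoin_adj_inr_inl]
        rintro ⟨-, hxB⟩; exact hxB (hsB hx)
      · simpa using hiB x hx y hy
    have := le_alphaNum hti
    omega
end joinalpha

section side
variable {α β : Type*} [Fintype α] [Fintype β] {G : SimpleGraph α} {H : SimpleGraph β}
  {A : Set α} {B : Set β}

lemma extraction (hA : alphaOn G A + 1 = alphaNum G) (hB : alphaOn H B + 1 = alphaNum H)
    (hJ : IsAlphaCritical (oneJoin G H A B)) {x y : α ⊕ β}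
    (hxy : (oneJoin G H A B).Adj x y) :
    ∃ (sl : Finset α) (sr : Finset β),
      sl.card + sr.card = alphaOn G A + alphaOn H B + 2 ∧
      (∀ g ∈ sl, ∀ g' ∈ sl, G.Adj g g' → s((Sum.inl g : α ⊕ β), Sum.inl g') = s(x, y)) ∧
      (∀ h ∈ sr, ∀ h' ∈ sr, H.Adj h h' → s((Sum.inr h : α ⊕ β), Sum.inr h') = s(x, y)) ∧
      (∀ g ∈ sl, ∀ h ∈ sr, g ∉ A → h ∉ B → s((Sum.inl g : α ⊕ β), Sum.inr h) = s(x, y)) := by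
  have hcrit := hJ x y hxy
  rw [alphaNum_oneJoin hA hB] at hcrit
  obtain ⟨s, hi, hc⟩ := exists_alphaNum ((oneJoin G H A B).deleteEdges {s(x, y)})
  rw [hcrit] at hc
  have key : ∀ u ∈ s, ∀ v ∈ s, (oneJoin G H A B).Adj u v → s(u, v) = s(x, y) := by
    intro u hu v hv hadj
    by_contra hne
    exact hi u hu v hv (deleteEdges_adj.mpr ⟨hadj, by simpa using hne⟩)
  refine ⟨s.toLeft, s.toRight, ?_, ?_, ?_, ?_⟩
  · rw [Finset.card_toLeft_add_card_toRight, hc]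
  · intro g hg g' hg' hadj
    exact key _ (Finset.mem_toLeft.mp hg) _ (Finset.mem_toLeft.mp hg')
      (oneJoin_adj_inl_inl.mpr hadj)
  · intro h hh h' hh' hadj
    exact key _ (Finset.mem_toRight.mp hh) _ (Finset.mem_toRight.mp hh')
      (oneJoin_adj_inr_inr.mpr hadj)
  · intro g hg h hh hgA hhB
    exact key _ (Finset.mem_toLeft.mp hg) _ (Finset.mem_toRight.mp hh)
      (oneJoin_adj_inl_inr.mpr ⟨hgA, hhB⟩)

lemma side (hA : alphaOn G A + 1 = alphaNum G) (hB : alphaOn H B + 1 = alphaNum H)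
    (hJ : IsAlphaCritical (oneJoin G H A B)) :
    (alphaOn G A + 1 = alphaNum G ∧ ∀ w ∉ A, alphaOn G (insert w A) = alphaNum G) ∧
    (∀ u v, G.Adj u v → ¬(u ∈ A ∧ v ∈ A) →
      G.Adj u v ∧ alphaNum (G.deleteEdges {s(u, v)}) = alphaNum G + 1) ∧
    (∀ u ∈ A, ∀ v ∈ A, G.Adj u v →
      (G.Adj u v ∧ alphaNum (G.deleteEdges {s(u, v)}) = alphaNum G + 1) ∨
        alphaOn (G.deleteEdges {s(u, v)}) A = alphaOn G A + 1) := by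
  classical
  have hBne : ∃ h0, h0 ∉ B := by
    by_contra hc
    push_neg at hc
    have : alphaNum H ≤ alphaOn H B := alphaOn_mono (fun z _ => hc z)
    omega
  obtain ⟨h0, hh0⟩ := hBne
  refine ⟨⟨hA, ?_⟩, ?_, ?_⟩
  · -- maximality
    intro w hw
    have hxy : (oneJoin G H A B).Adj (Sum.inl w) (Sum.inr h0) :=
      oneJoin_adj_inl_inr.mpr ⟨hw, hh0⟩
    obtain ⟨sl, sr, hcard, P1, P2, P3⟩ := extraction hA hB hJ hxy
    have hslG : ∀ g ∈ sl, ∀ g' ∈ sl, ¬ G.Adj g g' := by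
      intro g hg g' hg' hadj
      have := P1 g hg g' hg' hadj
      simp [Sym2.eq_iff] at this
    have hsrH : ∀ h ∈ sr, ∀ h' ∈ sr, ¬ H.Adj h h' := by
      intro h hh h' hh' hadj
      have := P2 h hh h' hh' hadj
      simp [Sym2.eq_iff] at this
    by_cases hsr : ∀ h ∈ sr, h ∈ B
    · have h1 : sr.card ≤ alphaOn H B := le_alphaOn (fun h hh => hsr h hh) hsrH
      have h2 : sl.card ≤ alphaNum G := le_alphaNum hslG
      omega
    · push_neg at hsr
      obtain ⟨h, hh, hhB⟩ := hsr
      have hslA : (↑sl : Set α) ⊆ insert w A := by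
        intro g hg
        by_cases hgA : g ∈ A
        · exact Set.mem_insert_of_mem _ hgA
        · have := P3 g hg h hh hgA hhB
          simp only [Sym2.eq_iff, Sum.inl.injEq] at this
          rcases this with ⟨rfl, -⟩ | ⟨h', -⟩
          · exact Set.mem_insert _ _
          · exact absurd h' (by simp)
      have h1 : sl.card ≤ alphaOn G (insert w A) := le_alphaOn hslA hslG
      have h2 : sr.card ≤ alphaNum H := le_alphaNum hsrH
      have h3 : alphaOn G (insert w A) ≤ alphaNum G := alphaOn_le_alphaNum G _
      omega
  · -- (ii)
    intro u v huv hnA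
    have hxy : (oneJoin G H A B).Adj (Sum.inl u) (Sum.inl v) := oneJoin_adj_inl_inl.mpr huv
    obtain ⟨sl, sr, hcard, P1, P2, P3⟩ := extraction hA hB hJ hxy
    have hslG : ∀ g ∈ sl, ∀ g' ∈ sl, ¬ (G.deleteEdges {s(u, v)}).Adj g g' := by
      intro g hg g' hg' hadj
      rw [deleteEdges_adj] at hadj
      have := P1 g hg g' hg' hadj.1
      simp only [Sym2.eq_iff, Sum.inl.injEq] at this
      exact hadj.2 (by simpa [Sym2.eq_iff] using this)
    have hsrH : ∀ h ∈ sr, ∀ h' ∈ sr, ¬ H.Adj h h' := by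
      intro h hh h' hh' hadj
      have := P2 h hh h' hh' hadj
      simp [Sym2.eq_iff] at this
    have hcross : ∀ g ∈ sl, ∀ h ∈ sr, g ∉ A → h ∉ B → False := by
      intro g hg h hh hgA hhB
      have := P3 g hg h hh hgA hhB
      simp [Sym2.eq_iff] at this
    by_cases hsr : ∀ h ∈ sr, h ∈ B
    · have h1 : sr.card ≤ alphaOn H B := le_alphaOn (fun h hh => hsr h hh) hsrH
      have h2 : sl.card ≤ alphaNum (G.deleteEdges {s(u, v)}) := le_alphaNum hslG
      have h3 : alphaNum (G.deleteEdges {s(u, v)}) ≤ alphaNum G + 1 :=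
        alphaOn_deleteEdges_le G Set.univ u v
      exact ⟨huv, by omega⟩
    · push_neg at hsr
      obtain ⟨h, hh, hhB⟩ := hsr
      have hslA : ∀ g ∈ sl, g ∈ A := by
        intro g hg
        by_contra hgA
        exact hcross g hg h hh hgA hhB
      have hslG' : ∀ g ∈ sl, ∀ g' ∈ sl, ¬ G.Adj g g' := by
        intro g hg g' hg' hadj
        have := P1 g hg g' hg' hadj
        simp only [Sym2.eq_iff, Sum.inl.injEq] at this
        rcases this with ⟨rfl, rfl⟩ | ⟨rfl, rfl⟩
        · exact hnA ⟨hslA _ hg, hslA _ hg'⟩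
        · exact hnA ⟨hslA _ hg', hslA _ hg⟩
      have h1 : sl.card ≤ alphaOn G A := le_alphaOn (fun g hg => hslA g hg) hslG'
      have h2 : sr.card ≤ alphaNum H := le_alphaNum hsrH
      exact absurd hcard (by omega)
  · -- (iii)
    intro u hu v hv huv
    have hxy : (oneJoin G H A B).Adj (Sum.inl u) (Sum.inl v) := oneJoin_adj_inl_inl.mpr huv
    obtain ⟨sl, sr, hcard, P1, P2, P3⟩ := extraction hA hB hJ hxy
    have hslG : ∀ g ∈ sl, ∀ g' ∈ sl, ¬ (G.deleteEdges {s(u, v)}).Adj g g' := by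
      intro g hg g' hg' hadj
      rw [deleteEdges_adj] at hadj
      have := P1 g hg g' hg' hadj.1
      simp only [Sym2.eq_iff, Sum.inl.injEq] at this
      exact hadj.2 (by simpa [Sym2.eq_iff] using this)
    have hsrH : ∀ h ∈ sr, ∀ h' ∈ sr, ¬ H.Adj h h' := by
      intro h hh h' hh' hadj
      have := P2 h hh h' hh' hadj
      simp [Sym2.eq_iff] at this
    by_cases hsr : ∀ h ∈ sr, h ∈ B
    · have h1 : sr.card ≤ alphaOn H B := le_alphaOn (fun h hh => hsr h hh) hsrH
      have h2 : sl.card ≤ alphaNum (G.deleteEdges {s(u, v)}) := le_alphaNum hslG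
      have h3 : alphaNum (G.deleteEdges {s(u, v)}) ≤ alphaNum G + 1 :=
        alphaOn_deleteEdges_le G Set.univ u v
      exact Or.inl ⟨huv, by omega⟩
    · push_neg at hsr
      obtain ⟨h, hh, hhB⟩ := hsr
      have hslA : (↑sl : Set α) ⊆ A := by
        intro g hg
        by_contra hgA
        have := P3 g hg h hh hgA hhB
        simp [Sym2.eq_iff] at this
      have h1 : sl.card ≤ alphaOn (G.deleteEdges {s(u, v)}) A := le_alphaOn hslA hslG
      have h2 : sr.card ≤ alphaNum H := le_alphaNum hsrH
      have h3 : alphaOn (G.deleteEdges {s(u, v)}) A ≤ alphaOn G A + 1 :=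
        alphaOn_deleteEdges_le G A u v
      exact Or.inr (by omega)

end side

/-- If the 1-join `J = j(G, G₀, H, H₀)` is an α-critical graph,
then conditions (i)–(iii) hold for the data `(G, G₀, H, H₀)`. -/
theorem conditions_of_oneJoin_isAlphaCritical {α β : Type*} [Fintype α] [Fintype β]
    (G : SimpleGraph α) (H : SimpleGraph β) (A : Set α) (B : Set β)
    (hA : alphaOn G A + 1 = alphaNum G) (hB : alphaOn H B + 1 = alphaNum H)
    (hJ : IsAlphaCritical (oneJoin G H A B)) :
    -- (i) maximality of the induced subgraphs G₀ and H₀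
    (IsMaxAlphaSub G A ∧ IsMaxAlphaSub H B) ∧
    -- (ii) the edges of G not contained in G₀ (resp. of H not in H₀) are α-critical
    ((∀ u v, G.Adj u v → ¬(u ∈ A ∧ v ∈ A) → IsCriticalEdge G u v) ∧
     (∀ u v, H.Adj u v → ¬(u ∈ B ∧ v ∈ B) → IsCriticalEdge H u v)) ∧
    -- (iii) every edge of G₀ is α-critical in G or in G₀ (and likewise for H₀)
    ((∀ u ∈ A, ∀ v ∈ A, G.Adj u v →
        IsCriticalEdge G u v ∨ alphaOn (G.deleteEdges {s(u, v)}) A = alphaOn G A + 1) ∧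
     (∀ u ∈ B, ∀ v ∈ B, H.Adj u v →
        IsCriticalEdge H u v ∨ alphaOn (H.deleteEdges {s(u, v)}) B = alphaOn H B + 1)) := by
  have hJ' : IsAlphaCritical (oneJoin H G B A) := isAlphaCritical_iso (joinSwapIso G H A B) hJ
  obtain ⟨m1, c1, d1⟩ := side hA hB hJ
  obtain ⟨m2, c2, d2⟩ := side hB hA hJ'
  exact ⟨⟨m1, m2⟩, ⟨c1, c2⟩, ⟨d1, d2⟩⟩
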